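/- Assume char F ≠ 2 and let f be a derivation of N. Then for every A ∈ N^{12} and all indices r, s with (b r, b s) = (3, t), the entry f(A) r s is zero; and for every A ∈ N^{t−1,t} and all indices r, s with (b r, b s) = (1, t−2), the entry f(A) r s is zero. -/

import Mathlib

/-! Pick a nonzero entry `A p q` of `A ∈ N^{ij}`, so `b p = i`, `b q = j`. For the first claim put
`B = E_{qr}`: then `A² = BA = 0`, hence `[A,[A,B]] = 0`, and applying `f` and expanding gives a
matrix identity whose `(p,s)` entry reduces, for block reasons, to `2 A_{pq} f(A)_{rs} = 0`. The
second claim is the mirror image, with `B = E_{sp}`, `AB = 0` and the `(r,q)` entry. -/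

/-- `A` is a strictly block upper triangular matrix relative to the block function `b`
(index `r` lies in block `b r`): `A r s = 0` whenever `b r ≥ b s`. -/
def InN {F : Type*} [Field F] {n : ℕ} (b : Fin n → ℕ)
    (A : Matrix (Fin n) (Fin n) F) : Prop :=
  ∀ r s, b s ≤ b r → A r s = 0

/-- `A` lies in the `(i,j)` block `N^{ij}`: `A r s = 0` unless `b r = i` and `b s = j`. -/
def InBlk {F : Type*} [Field F] {n : ℕ} (b : Fin n → ℕ) (i j : ℕ)
    (A : Matrix (Fin n) (Fin n) F) : Prop :=
  ∀ r s, ¬(b r = i ∧ b s = j) → A r s = 0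

/-- `f` is a derivation of the Lie algebra `N` of strictly block upper triangular matrices:
it maps `N` into `N` and satisfies `f [X,Y] = [f X, Y] + [X, f Y]` on `N`,
where `[X,Y] = XY - YX`. -/
def IsDerN {F : Type*} [Field F] {n : ℕ} (b : Fin n → ℕ)
    (f : Matrix (Fin n) (Fin n) F →ₗ[F] Matrix (Fin n) (Fin n) F) : Prop :=
  (∀ A, InN b A → InN b (f A)) ∧
  ∀ X Y, InN b X → InN b Y →
    f (X * Y - Y * X) = (f X * Y - Y * f X) + (X * f Y - f Y * X)

open Matrix

theorem Matrix.mul_apply_eq_zero_of_forall_or {l m o α : Type*} [Fintype m]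
    [NonUnitalNonAssocSemiring α] {X : Matrix l m α} {Y : Matrix m o α} {r : l} {s : o}
    (h : ∀ k, X r k = 0 ∨ Y k s = 0) : (X * Y) r s = 0 :=
  Finset.sum_eq_zero fun k _ => by rcases h k with h | h <;> simp [h]

theorem Matrix.mul_single_mul_apply {l m o α : Type*} [Fintype m] [DecidableEq m] [Semiring α]
    (X : Matrix l m α) (Y : Matrix m o α) (k q : m) (c : α) (r : l) (s : o) :
    (X * single k q c * Y) r s = X r k * c * Y q s := by
  simp [mul_apply, single, ite_and]

section Blocks

variable {F : Type*} [Field F] {n : ℕ} {b : Fin n → ℕ} {i j : ℕ}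
  {A X Y : Matrix (Fin n) (Fin n) F}

theorem InN.mul (hX : InN b X) (hY : InN b Y) : InN b (X * Y) := fun r s hsr =>
  mul_apply_eq_zero_of_forall_or fun k =>
    (le_total (b k) (b r)).imp (hX r k) fun hrk => hY k s (hsr.trans hrk)

theorem inN_single {k q : Fin n} (h : b k < b q) (c : F) : InN b (single k q c) :=
  fun r s hsr => single_apply_of_ne _ _ _ _ _ fun ⟨hk, hq⟩ => by subst hk hq; omega

theorem InBlk.eq_of_ne_zero (hA : InBlk b i j A) {p q : Fin n} (h : A p q ≠ 0) :
    b p = i ∧ b q = j :=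
  by_contra fun h' => h (hA p q h')

theorem InBlk.apply_eq_zero_of_row_ne (hA : InBlk b i j A) {p : Fin n} (hp : b p ≠ i)
    (q : Fin n) : A p q = 0 :=
  hA p q fun h => hp h.1

theorem InBlk.apply_eq_zero_of_col_ne (hA : InBlk b i j A) {q : Fin n} (hq : b q ≠ j)
    (p : Fin n) : A p q = 0 :=
  hA p q fun h => hq h.2

theorem InBlk.inN (hij : i < j) (hA : InBlk b i j A) : InN b A := fun r s hsr =>
  hA r s fun ⟨hr, hs⟩ => by omega

theorem InBlk.mul_self_eq_zero (hij : i ≠ j) (hA : InBlk b i j A) : A * A = 0 := by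
  ext p q
  refine mul_apply_eq_zero_of_forall_or fun k => ?_
  by_cases hk : b k = j
  · exact .inr (hA.apply_eq_zero_of_row_ne (by omega) q)
  · exact .inl (hA.apply_eq_zero_of_col_ne hk p)

theorem InN.mul_inBlk_apply_eq_zero (hX : InN b X) (hA : InBlk b i j A) {p : Fin n}
    (hp : i ≤ b p) (q : Fin n) : (X * A) p q = 0 :=
  mul_apply_eq_zero_of_forall_or fun k => by
    by_cases hk : b k = i
    · exact .inl (hX p k (by omega))
    · exact .inr (hA.apply_eq_zero_of_row_ne hk q)

theorem InBlk.mul_inN_apply_eq_zero (hA : InBlk b i j A) (hX : InN b X) {q : Fin n}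
    (hq : b q ≤ j) (p : Fin n) : (A * X) p q = 0 :=
  mul_apply_eq_zero_of_forall_or fun k => by
    by_cases hk : b k = j
    · exact .inr (hX k q (by omega))
    · exact .inl (hA.apply_eq_zero_of_col_ne hk p)

theorem InBlk.mul_apply_eq_zero_of_row_ne (hA : InBlk b i j A) {p : Fin n} (hp : b p ≠ i)
    (X : Matrix (Fin n) (Fin n) F) (q : Fin n) : (A * X) p q = 0 :=
  mul_apply_eq_zero_of_forall_or fun k => .inl (hA.apply_eq_zero_of_row_ne hp k)

theorem InBlk.mul_apply_eq_zero_of_col_ne (hA : InBlk b i j A) {q : Fin n} (hq : b q ≠ j)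
    (X : Matrix (Fin n) (Fin n) F) (p : Fin n) : (X * A) p q = 0 :=
  mul_apply_eq_zero_of_forall_or fun k => .inr (hA.apply_eq_zero_of_col_ne hq k)

theorem InBlk.single_mul_eq_zero (hA : InBlk b i j A) {r : Fin n} (hr : b r ≠ i) (q : Fin n)
    (c : F) : single q r c * A = 0 := by
  ext u v
  by_cases hu : u = q
  · simp [hu, hA.apply_eq_zero_of_row_ne hr]
  · exact single_mul_apply_of_ne _ _ _ _ _ hu _

theorem InBlk.mul_single_eq_zero (hA : InBlk b i j A) {s : Fin n} (hs : b s ≠ j) (p : Fin n)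
    (c : F) : A * single s p c = 0 := by
  ext u v
  by_cases hv : v = p
  · simp [hv, hA.apply_eq_zero_of_col_ne hs]
  · exact mul_single_apply_of_ne _ _ _ _ _ hv _

end Blocks

namespace IsDerN

variable {F : Type*} [Field F] {n : ℕ} {b : Fin n → ℕ} {i j : ℕ}
  {f : Matrix (Fin n) (Fin n) F →ₗ[F] Matrix (Fin n) (Fin n) F} {A B : Matrix (Fin n) (Fin n) F}

theorem map_bracket_bracket_of_mul_eq_zero_left (hf : IsDerN b f) (hA : InN b A) (hB : InN b B)
    (hAA : A * A = 0) (hBA : B * A = 0) :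
    f A * A * B + A * f A * B + B * f A * A = 2 • (A * B * f A + A * f B * A) := by
  have hXAA (X : Matrix (Fin n) (Fin n) F) : X * A * A = 0 := by
    rw [Matrix.mul_assoc, hAA, Matrix.mul_zero]
  have hXBA (X : Matrix (Fin n) (Fin n) F) : X * B * A = 0 := by
    rw [Matrix.mul_assoc, hBA, Matrix.mul_zero]
  have hfAB : f (A * B) = f A * B - B * f A + (A * f B - f B * A) := by
    simpa [hBA] using hf.2 A B hA hB
  have key := hf.2 A (A * B) hA (hA.mul hB)
  rw [← Matrix.mul_assoc, hAA, Matrix.mul_assoc, hBA] at key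
  simp only [hfAB, sub_zero, Matrix.zero_mul, Matrix.mul_zero, map_zero, mul_add, add_mul, mul_sub,
    sub_mul, ← Matrix.mul_assoc, hAA, hXAA, hXBA] at key
  linear_combination (norm := abel) key.symm

theorem map_bracket_bracket_of_mul_eq_zero_right (hf : IsDerN b f) (hA : InN b A) (hB : InN b B)
    (hAA : A * A = 0) (hAB : A * B = 0) :
    2 • (f A * B * A + A * f B * A) = B * A * f A + A * f A * B + B * f A * A := by
  have hXAA (X : Matrix (Fin n) (Fin n) F) : X * A * A = 0 := by
    rw [Matrix.mul_assoc, hAA, Matrix.mul_zero]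
  have hfBA : f (B * A) = f B * A - A * f B + (B * f A - f A * B) := by
    simpa [hAB] using hf.2 B A hB hA
  have key := hf.2 A (B * A) hA (hB.mul hA)
  rw [← Matrix.mul_assoc, hAB, Matrix.mul_assoc, hAA] at key
  simp only [hfBA, sub_zero, Matrix.zero_mul, Matrix.mul_zero, map_zero, mul_add, add_mul, mul_sub,
    sub_mul, ← Matrix.mul_assoc, hAA, hAB, hXAA] at key
  linear_combination (norm := abel) key.symm

theorem apply_eq_zero_of_inBlk_of_lt_row (hf : IsDerN b f) (h2 : (2 : F) ≠ 0) (hij : i < j)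
    (hA : InBlk b i j A) {r s : Fin n} (hr : j < b r) (hs : b s ≠ j) : f A r s = 0 := by
  rcases eq_or_ne A 0 with rfl | hA0
  · simp
  obtain ⟨p, q, hpq⟩ : ∃ p q, A p q ≠ 0 := by
    by_contra! h
    exact hA0 (Matrix.ext h)
  obtain ⟨hp, hq⟩ := hA.eq_of_ne_zero hpq
  have hAN := hA.inN hij
  have hfA := hf.1 A hAN
  have key := congrFun (congrFun (hf.map_bracket_bracket_of_mul_eq_zero_left hAN
    (inN_single (show b q < b r by omega) 1) (hA.mul_self_eq_zero hij.ne)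
    (hA.single_mul_eq_zero (show b r ≠ i by omega) q 1)) p) s
  have e₁ : (f A * A * single q r (1 : F)) p s = 0 :=
    mul_apply_eq_zero_of_forall_or fun k => .inl (hfA.mul_inBlk_apply_eq_zero hA hp.ge k)
  have e₂ : (A * f A * single q r (1 : F)) p s = 0 := mul_apply_eq_zero_of_forall_or fun k => by
    by_cases hk : k = q
    · exact .inl (hk ▸ hA.mul_inN_apply_eq_zero hfA hq.le p)
    · exact .inr (single_apply_of_ne _ _ _ _ _ fun h => hk h.1.symm)
  simpa [mul_single_mul_apply, e₁, e₂, hA.mul_apply_eq_zero_of_col_ne hs, hpq, h2] using key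

theorem apply_eq_zero_of_inBlk_of_col_lt (hf : IsDerN b f) (h2 : (2 : F) ≠ 0) (hij : i < j)
    (hA : InBlk b i j A) {r s : Fin n} (hs : b s < i) (hr : b r ≠ i) : f A r s = 0 := by
  rcases eq_or_ne A 0 with rfl | hA0
  · simp
  obtain ⟨p, q, hpq⟩ : ∃ p q, A p q ≠ 0 := by
    by_contra! h
    exact hA0 (Matrix.ext h)
  obtain ⟨hp, hq⟩ := hA.eq_of_ne_zero hpq
  have hAN := hA.inN hij
  have hfA := hf.1 A hAN
  have key := congrFun (congrFun (hf.map_bracket_bracket_of_mul_eq_zero_right hAN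
    (inN_single (show b s < b p by omega) 1) (hA.mul_self_eq_zero hij.ne)
    (hA.mul_single_eq_zero (show b s ≠ j by omega) p 1)) r) q
  have e₁ : (single s p (1 : F) * A * f A) r q = 0 := by
    rw [Matrix.mul_assoc]
    exact mul_apply_eq_zero_of_forall_or fun k => .inr (hA.mul_inN_apply_eq_zero hfA hq.le k)
  have e₂ : (single s p (1 : F) * f A * A) r q = 0 := by
    rw [Matrix.mul_assoc]
    refine mul_apply_eq_zero_of_forall_or fun k => ?_
    by_cases hk : k = p
    · exact .inr (hk ▸ hfA.mul_inBlk_apply_eq_zero hA hp.ge q)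
    · exact .inl (single_apply_of_ne _ _ _ _ _ fun h => hk h.2.symm)
  simpa [mul_single_mul_apply, Matrix.mul_assoc A, e₁, e₂, hA.mul_apply_eq_zero_of_row_ne hr, hpq,
    h2] using key

end IsDerN

theorem stmt6_general {F : Type*} [Field F] {n t : ℕ} (b : Fin n → ℕ)
    (ht : 3 ≤ t)
    (hchar : ringChar F ≠ 2)
    (f : Matrix (Fin n) (Fin n) F →ₗ[F] Matrix (Fin n) (Fin n) F)
    (hf : IsDerN b f) :
    (∀ A, InBlk b 1 2 A → ∀ r s, b r = 3 → b s = t → f A r s = 0) ∧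
    (∀ A, InBlk b (t - 1) t A → ∀ r s, b r = 1 → b s = t - 2 → f A r s = 0) := by
  have h2 : (2 : F) ≠ 0 := Ring.two_ne_zero hchar
  refine ⟨fun A hA r s hr hs => ?_, fun A hA r s hr hs => ?_⟩
  · exact hf.apply_eq_zero_of_inBlk_of_lt_row h2 one_lt_two hA (by omega) (by omega)
  · exact hf.apply_eq_zero_of_inBlk_of_col_lt h2 (by omega) hA (by omega) (by omega)

/-- when `char F ≠ 2`, for a derivation `f` of `N`, the `(3,t)` block of
`f(N^{12})` and the `(1,t-2)` block of `f(N^{t-1,t})` vanish. -/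
theorem stmt6 {F : Type*} [Field F] {n t : ℕ} (b : Fin n → ℕ)
    (hn : 1 ≤ n) (ht : 3 ≤ t) (hmono : Monotone b)
    (hlb : ∀ r, 1 ≤ b r) (hub : ∀ r, b r ≤ t)
    (hsurj : ∀ k, 1 ≤ k → k ≤ t → ∃ r, b r = k)
    (hchar : ringChar F ≠ 2)
    (f : Matrix (Fin n) (Fin n) F →ₗ[F] Matrix (Fin n) (Fin n) F)
    (hf : IsDerN b f) :
    (∀ A, InBlk b 1 2 A → ∀ r s, b r = 3 → b s = t → f A r s = 0) ∧
    (∀ A, InBlk b (t - 1) t A → ∀ r s, b r = 1 → b s = t - 2 → f A r s = 0) :=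
  stmt6_general b ht hchar f hf
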